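/- Let S be a symmetrically-normed ideal, B a closed range operator, and (B_n) a sequence of closed range operators with B_n − B ∈ S and ‖B_n − B‖_S → 0. If ker(B_n)^⊥ ∩ ker(B) = {0} for all sufficiently large n, then ‖B_n† − B†‖_S → 0. -/

import Mathlib

open ContinuousLinearMap Filter MeasureTheory
open scoped InnerProductSpace

noncomputable section

variable {H : Type*} [NormedAddCommGroup H] [InnerProductSpace ℂ H] [CompleteSpace H]

/-- `B` is the Moore-Penrose inverse of `A`. -/
def IsMP (A B : H →L[ℂ] H) : Prop :=
  A * B * A = A ∧ B * A * B = B ∧ IsSelfAdjoint (A * B) ∧ IsSelfAdjoint (B * A)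

/-- A symmetrically-normed ideal of bounded operators on `H`. -/
structure SymmIdeal (H : Type*) [NormedAddCommGroup H] [InnerProductSpace ℂ H]
    [CompleteSpace H] where
  mem : (H →L[ℂ] H) → Prop
  snorm : (H →L[ℂ] H) → ℝ
  zero_mem : mem 0
  neg_mem : ∀ {X}, mem X → mem (-X)
  add_mem : ∀ {X Y}, mem X → mem Y → mem (X + Y)
  smul_mem : ∀ (c : ℂ) {X}, mem X → mem (c • X)
  mul_mem_left : ∀ (A : H →L[ℂ] H) {X}, mem X → mem (A * X)
  mul_mem_right : ∀ (A : H →L[ℂ] H) {X}, mem X → mem (X * A)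
  snorm_nonneg : ∀ X, 0 ≤ snorm X
  snorm_triangle : ∀ X Y, snorm (X + Y) ≤ snorm X + snorm Y
  snorm_symm : ∀ (A C X : H →L[ℂ] H), mem X → snorm (A * X * C) ≤ ‖A‖ * snorm X * ‖C‖
  opNorm_le_snorm : ∀ {X}, mem X → ‖X‖ ≤ snorm X

/-!
Write `E = T' - T` for two operators with Moore–Penrose inverses `G`, `G'`. Wedin's identity
`G' - G = -G' E G + G' G'* E* (1 - T G) + (1 - G' T') E* G* G`
writes the difference of the inverses as three terms, each carrying `E` or `E*` between bounded
factors, and the outer factors `1 - T G`, `1 - G' T'` are orthogonal projections. Since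
`X* = W X W` for a contraction `W` (polar decomposition), the ideal norm of `E*` is at most that
of `E`, so `‖G' - G‖_S ≤ (‖G'‖ ‖G‖ + ‖G'‖² + ‖G‖²) ‖E‖_S`.

It remains to bound `‖B_n†‖` uniformly, and this is where `ker(B_n)ᗮ ⊓ ker B = 0` enters. For the
adjoints `T = B*`, `T' = B_n*` it says `ker (T G T') ≤ ker T'`; since `T (1 - G (T - T')) = T G T'`
and `1 - G (T - T')` is invertible once `‖G‖ ‖E‖ < 1`, this yields
`(1 - ‖G‖ ‖E‖) ‖G'‖ ≤ ‖G‖`.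
-/

lemma norm_cfcAbs_apply (X : H →L[ℂ] H) (v : H) : ‖CFC.abs X v‖ = ‖X v‖ := by
  have h := apply_norm_sq_eq_inner_adjoint_left (CFC.abs X) v
  rw [← star_eq_adjoint, (CFC.abs_nonneg X).isSelfAdjoint.star_eq, ← mul_def, CFC.abs_mul_abs,
    star_eq_adjoint, mul_def, ← apply_norm_sq_eq_inner_adjoint_left] at h
  exact (pow_left_inj₀ (norm_nonneg _) (norm_nonneg _) two_ne_zero).mp h

lemma exists_partialIsometry_mul_eq {A X : H →L[ℂ] H} (h : ∀ v, ‖A v‖ = ‖X v‖) :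
    ∃ U : H →L[ℂ] H, ‖U‖ ≤ 1 ∧ X = U * A ∧ star U * U * A = A := by
  set N := (LinearMap.range (A : H →ₗ[ℂ] H)).topologicalClosure
  have hAN : ∀ v, A v ∈ N := fun v => Submodule.le_topologicalClosure _ ⟨v, rfl⟩
  let e : H →ₗ[ℂ] N := (A : H →ₗ[ℂ] H).codRestrict N hAN
  have he : DenseRange e := by
    rw [DenseRange, Subtype.dense_iff, ← Set.range_comp]
    exact (Submodule.topologicalClosure_coe _).subset
  let F : N →L[ℂ] H := (X : H →ₗ[ℂ] H).extendOfNorm e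
  have hFe : ∀ v, F (e v) = X v :=
    LinearMap.extendOfNorm_eq he ⟨1, fun v => by simp [e, h]⟩
  have hF : ∀ x, ‖F x‖ = ‖x‖ := by
    refine he.induction ?_ (isClosed_eq (by fun_prop) continuous_norm)
    rintro _ ⟨v, rfl⟩
    rw [hFe, ← h]; rfl
  let Fi : N →ₗᵢ[ℂ] H := ⟨F, hF⟩
  have hPA : ∀ v, N.orthogonalProjectionOnto (A v) = e v := fun v =>
    N.orthogonalProjectionOnto_mem_subspace_eq_self (e v)
  refine ⟨F ∘L N.orthogonalProjectionOnto, ?_, ?_, ?_⟩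
  · refine opNorm_le_bound _ zero_le_one fun w => ?_
    rw [one_mul, comp_apply, hF]
    exact N.norm_orthogonalProjectionOnto_apply_le w
  · ext v
    rw [mul_apply_eq_comp, comp_apply, hPA, hFe]
  · ext v
    refine ext_inner_right ℂ fun w => ?_
    rw [mul_apply_eq_comp, mul_apply_eq_comp, star_eq_adjoint, adjoint_inner_left, comp_apply,
      comp_apply, hPA]
    change ⟪Fi (e v), Fi _⟫_ℂ = _
    rw [Fi.inner_map_map, Submodule.inner_orthogonalProjectionOnto_eq_of_mem_left]
    rfl

lemma exists_star_eq_mul_mul (X : H →L[ℂ] H) : ∃ W : H →L[ℂ] H, ‖W‖ ≤ 1 ∧ star X = W * X * W := by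
  obtain ⟨U, hU, hXU, hUU⟩ := exists_partialIsometry_mul_eq (norm_cfcAbs_apply X)
  refine ⟨star U, by rwa [norm_star], ?_⟩
  calc star X = star (U * CFC.abs X) := congrArg star hXU
    _ = star U * U * CFC.abs X * star U := by
        rw [star_mul, (CFC.abs_nonneg X).isSelfAdjoint.star_eq, hUU]
    _ = star U * X * star U := by rw [mul_assoc (star U), ← hXU]

namespace SymmIdeal

variable (S : SymmIdeal H)

lemma snorm_mul_mul_le {A X C : H →L[ℂ] H} (hX : S.mem X) {a x c : ℝ} (ha : ‖A‖ ≤ a)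
    (hx : S.snorm X ≤ x) (hc : ‖C‖ ≤ c) : S.snorm (A * X * C) ≤ a * x * c :=
  (S.snorm_symm A C X hX).trans <| mul_le_mul (mul_le_mul ha hx (S.snorm_nonneg X)
    ((norm_nonneg A).trans ha)) hc (norm_nonneg C)
    (mul_nonneg ((norm_nonneg A).trans ha) ((S.snorm_nonneg X).trans hx))

lemma mem_star {X : H →L[ℂ] H} (hX : S.mem X) : S.mem (star X) := by
  obtain ⟨W, -, hW⟩ := exists_star_eq_mul_mul X
  exact hW ▸ S.mul_mem_right W (S.mul_mem_left W hX)

lemma snorm_star_le {X : H →L[ℂ] H} (hX : S.mem X) : S.snorm (star X) ≤ S.snorm X := by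
  obtain ⟨W, hW1, hW⟩ := exists_star_eq_mul_mul X
  simpa [hW] using S.snorm_mul_mul_le hX hW1 le_rfl hW1

lemma tendsto_norm_of_tendsto_snorm {X : ℕ → H →L[ℂ] H} (hX : ∀ n, S.mem (X n))
    (h : Tendsto (fun n => S.snorm (X n)) atTop (nhds 0)) :
    Tendsto (fun n => ‖X n‖) atTop (nhds 0) :=
  squeeze_zero (fun _ => norm_nonneg _) (fun n => S.opNorm_le_snorm (hX n)) h

end SymmIdeal

lemma one_sub_norm_mul_le_norm_one_sub_mul {R : Type*} [NormedRing R] (s X : R) :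
    (1 - ‖s‖) * ‖X‖ ≤ ‖(1 - s) * X‖ := by
  have : ‖X‖ ≤ ‖(1 - s) * X‖ + ‖s‖ * ‖X‖ :=
    calc ‖X‖ = ‖(1 - s) * X + s * X‖ := by rw [sub_mul, one_mul, sub_add_cancel]
      _ ≤ ‖(1 - s) * X‖ + ‖s * X‖ := norm_add_le _ _
      _ ≤ ‖(1 - s) * X‖ + ‖s‖ * ‖X‖ := by gcongr; exact norm_mul_le s X
  linarith

section

variable {T G T' G' : H →L[ℂ] H}

lemma IsMP.isStarProjection_mul (h : IsMP T G) : IsStarProjection (T * G) :=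
  ⟨by rw [IsIdempotentElem, ← mul_assoc, h.1], h.2.2.1⟩

lemma IsMP.isStarProjection_mul' (h : IsMP T G) : IsStarProjection (G * T) :=
  ⟨by rw [IsIdempotentElem, ← mul_assoc, h.2.1], h.2.2.2⟩

theorem IsMP.sub_eq (hT : IsMP T G) (hT' : IsMP T' G') :
    G' - G = -G' * (T' - T) * G + G' * star G' * star (T' - T) * (1 - T * G)
      + (1 - G' * T') * star (T' - T) * (star G * G) := by
  have h₁ : G' * star G' * star T' = G' := by
    rw [mul_assoc, ← star_mul, hT'.2.2.1.star_eq, ← mul_assoc, hT'.2.1]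
  have h₂ : star T * (1 - T * G) = 0 := by
    rw [mul_sub, mul_one, ← hT.2.2.1.star_eq, ← star_mul, hT.1, sub_self]
  have h₃ : (1 - G' * T') * star T' = 0 := by
    rw [sub_mul, one_mul, ← hT'.2.2.2.star_eq, ← star_mul, ← mul_assoc, hT'.1, sub_self]
  have h₄ : star T * (star G * G) = G := by
    rw [← mul_assoc, ← star_mul, hT.2.2.2.star_eq, hT.2.1]
  have expand : -G' * (T' - T) * G + G' * star G' * star (T' - T) * (1 - T * G)
      + (1 - G' * T') * star (T' - T) * (star G * G)
      = -(G' * T' * G) + G' * T * G + G' * star G' * star T' * (1 - T * G)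
        - G' * star G' * (star T * (1 - T * G)) + (1 - G' * T') * star T' * (star G * G)
        - (1 - G' * T') * (star T * (star G * G)) := by
    rw [star_sub]; noncomm_ring
  rw [expand, h₁, h₂, h₃, h₄]
  noncomm_ring

theorem IsMP.one_sub_mul_norm_le (hT : IsMP T G) (hT' : IsMP T' G')
    (hsmall : ‖G‖ * ‖T' - T‖ < 1) (hker : ∀ z, (T * G * T') z = 0 → T' z = 0) :
    (1 - ‖G‖ * ‖T' - T‖) * ‖G'‖ ≤ ‖G‖ := by
  set s := G * (T - T')
  have hs : ‖s‖ ≤ ‖G‖ * ‖T' - T‖ := norm_sub_rev T' T ▸ norm_mul_le G (T - T')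
  obtain ⟨u, hu⟩ := isUnit_one_sub_of_norm_lt_one (hs.trans_lt hsmall)
  have hT1 : T * (1 - G * T) = 0 := by rw [mul_sub, mul_one, ← mul_assoc, hT.1, sub_self]
  have hTC : T * (1 - s) = T * G * T' := by
    rw [mul_sub, mul_one, ← mul_assoc, mul_sub, hT.1]; abel
  -- `(1 - s) Z` is the `ker T`-part of `(1 - s) G'`, so `T G T' Z = T (1 - s) Z = 0`.
  set Z := (↑u⁻¹ : H →L[ℂ] H) * ((1 - G * T) * (1 - s) * G')
  have hCZ : (1 - s) * Z = (1 - G * T) * (1 - s) * G' := by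
    have := u.mul_inv_cancel_left ((1 - G * T) * (1 - s) * G')
    rwa [hu] at this
  have hT'Z : T' * Z = 0 := by
    have h : T * G * T' * Z = 0 := by
      rw [← hTC, mul_assoc, hCZ, ← mul_assoc, ← mul_assoc, hT1, zero_mul, zero_mul]
    ext w
    exact hker (Z w) congr($h w)
  have hG' : G' = G' * T' * (G' - Z) := by
    rw [mul_sub, mul_assoc G' T' Z, hT'Z, mul_zero, sub_zero, hT'.2.1]
  have hCG' : (1 - s) * (G' - Z) = G * (T * G) * (T' * G') := by
    rw [mul_sub, hCZ, ← sub_mul, show 1 - s - (1 - G * T) * (1 - s) = G * (T * (1 - s)) by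
      noncomm_ring, hTC]
    noncomm_ring
  have hs1 : 0 ≤ 1 - ‖s‖ := by linarith
  calc (1 - ‖G‖ * ‖T' - T‖) * ‖G'‖ ≤ (1 - ‖s‖) * ‖G' - Z‖ := by
        gcongr
        calc ‖G'‖ = ‖G' * T' * (G' - Z)‖ := congrArg _ hG'
          _ ≤ ‖G' * T'‖ * ‖G' - Z‖ := norm_mul_le _ _
          _ ≤ ‖G' - Z‖ := mul_le_of_le_one_left (norm_nonneg _) hT'.isStarProjection_mul'.norm_le
    _ ≤ ‖(1 - s) * (G' - Z)‖ := one_sub_norm_mul_le_norm_one_sub_mul _ _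
    _ = ‖G * (T * G) * (T' * G')‖ := by rw [hCG']
    _ ≤ ‖G‖ * ‖T * G‖ * ‖T' * G'‖ := norm_mul₃_le
    _ ≤ ‖G‖ * 1 * 1 := by
        gcongr
        exacts [hT.isStarProjection_mul.norm_le, hT'.isStarProjection_mul.norm_le]
    _ = ‖G‖ := by ring

lemma IsMP.star_apply_eq_zero_of_inf_eq_bot (hT : IsMP T G)
    (h : (LinearMap.ker (T' : H →ₗ[ℂ] H))ᗮ ⊓ LinearMap.ker (T : H →ₗ[ℂ] H) = ⊥) (z : H)
    (hz : (star T * star G * star T') z = 0) : star T' z = 0 := by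
  have hw₁ : star T' z ∈ (LinearMap.ker (T' : H →ₗ[ℂ] H))ᗮ := by
    refine (Submodule.mem_orthogonal _ _).mpr fun u (hu : T' u = 0) => ?_
    rw [star_eq_adjoint, adjoint_inner_right, hu, inner_zero_left]
  have hw₂ : star T' z ∈ LinearMap.ker (T : H →ₗ[ℂ] H) := by
    rw [← star_mul, hT.2.2.2.star_eq] at hz
    rw [LinearMap.mem_ker, coe_coe]
    calc T (star T' z) = (T * G * T * star T') z := by rw [hT.1]; rfl
      _ = T ((G * T * star T') z) := by simp only [mul_assoc]; rfl
      _ = 0 := by rw [hz, map_zero]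
  have hw : star T' z ∈ (LinearMap.ker (T' : H →ₗ[ℂ] H))ᗮ ⊓ LinearMap.ker (T : H →ₗ[ℂ] H) :=
    ⟨hw₁, hw₂⟩
  rwa [h, Submodule.mem_bot] at hw

lemma IsMP.star (h : IsMP T G) : IsMP (star T) (star G) := by
  obtain ⟨h₁, h₂, h₃, h₄⟩ := h
  refine ⟨?_, ?_, ?_, ?_⟩
  · rw [← star_mul, ← star_mul, ← mul_assoc, h₁]
  · rw [← star_mul, ← star_mul, ← mul_assoc, h₂]
  · rw [← star_mul]; exact IsSelfAdjoint.star_iff.mpr h₄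
  · rw [← star_mul]; exact IsSelfAdjoint.star_iff.mpr h₃

theorem SymmIdeal.snorm_sub_le_of_isMP (S : SymmIdeal H) (hT : IsMP T G) (hT' : IsMP T' G')
    (hE : S.mem (T' - T)) :
    S.snorm (G' - G) ≤ (‖G'‖ * ‖G‖ + ‖G'‖ ^ 2 + ‖G‖ ^ 2) * S.snorm (T' - T) := by
  set E := T' - T
  have h₁ : S.snorm (-G' * E * G) ≤ ‖G'‖ * S.snorm E * ‖G‖ :=
    S.snorm_mul_mul_le hE (norm_neg G').le le_rfl le_rfl
  have h₂ : S.snorm (G' * star G' * star E * (1 - T * G)) ≤ ‖G'‖ ^ 2 * S.snorm E * 1 :=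
    S.snorm_mul_mul_le (S.mem_star hE) (CStarRing.norm_self_mul_star.trans (sq ‖G'‖).symm).le
      (S.snorm_star_le hE) hT.isStarProjection_mul.one_sub.norm_le
  have h₃ : S.snorm ((1 - G' * T') * star E * (star G * G)) ≤ 1 * S.snorm E * ‖G‖ ^ 2 :=
    S.snorm_mul_mul_le (S.mem_star hE) hT'.isStarProjection_mul'.one_sub.norm_le
      (S.snorm_star_le hE) (CStarRing.norm_star_mul_self.trans (sq ‖G‖).symm).le
  calc S.snorm (G' - G) ≤ S.snorm (-G' * E * G) + S.snorm (G' * star G' * star E * (1 - T * G))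
        + S.snorm ((1 - G' * T') * star E * (star G * G)) := by
        rw [hT.sub_eq hT']
        exact (S.snorm_triangle _ _).trans (by gcongr; exact S.snorm_triangle _ _)
    _ ≤ ‖G'‖ * S.snorm E * ‖G‖ + ‖G'‖ ^ 2 * S.snorm E * 1 + 1 * S.snorm E * ‖G‖ ^ 2 := by
        gcongr
    _ = (‖G'‖ * ‖G‖ + ‖G'‖ ^ 2 + ‖G‖ ^ 2) * S.snorm E := by ring

end

theorem mp_continuity_of_eventually_trivial_intersection_general (S : SymmIdeal H)
    (B : H →L[ℂ] H) (Bseq : ℕ → H →L[ℂ] H)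
    (Bdag : H →L[ℂ] H) (Bseqdag : ℕ → H →L[ℂ] H)
    (hB : IsMP B Bdag) (hBn : ∀ n, IsMP (Bseq n) (Bseqdag n))
    (hmem : ∀ n, S.mem (Bseq n - B))
    (hconv : Filter.Tendsto (fun n => S.snorm (Bseq n - B)) Filter.atTop (nhds 0))
    (hker : ∀ᶠ n in Filter.atTop,
      (LinearMap.ker (Bseq n : H →ₗ[ℂ] H))ᗮ ⊓ LinearMap.ker (B : H →ₗ[ℂ] H) = (⊥ : Submodule ℂ H)) :
    Filter.Tendsto (fun n => S.snorm (Bseqdag n - Bdag)) Filter.atTop (nhds 0) := by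
  set g := ‖Bdag‖
  have hsmall : ∀ᶠ n in atTop, g * ‖Bseq n - B‖ < 1 / 2 := by
    have := (S.tendsto_norm_of_tendsto_snorm hmem hconv).const_mul g
    rw [mul_zero] at this
    exact this.eventually (gt_mem_nhds one_half_pos)
  have hbounded : ∀ᶠ n in atTop, ‖Bseqdag n‖ ≤ 2 * g := by
    filter_upwards [hker, hsmall] with n hn hsn
    have := hB.star.one_sub_mul_norm_le (hBn n).star
      (by rw [← star_sub, norm_star, norm_star]; linarith)
      (hB.star_apply_eq_zero_of_inf_eq_bot hn)
    rw [← star_sub, norm_star, norm_star, norm_star] at this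
    nlinarith [norm_nonneg (Bseqdag n)]
  have hlipschitz : ∀ᶠ n in atTop,
      S.snorm (Bseqdag n - Bdag) ≤ 7 * g ^ 2 * S.snorm (Bseq n - B) := by
    filter_upwards [hbounded] with n hn
    refine (S.snorm_sub_le_of_isMP hB (hBn n) (hmem n)).trans ?_
    gcongr
    · exact S.snorm_nonneg _
    · nlinarith [norm_nonneg (Bseqdag n), norm_nonneg Bdag]
  refine squeeze_zero' (Eventually.of_forall fun n => S.snorm_nonneg _) hlipschitz ?_
  simpa using hconv.const_mul (7 * g ^ 2)

theorem mp_continuity_of_eventually_trivial_intersection (S : SymmIdeal H)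
    (B : H →L[ℂ] H) (Bseq : ℕ → H →L[ℂ] H)
    (Bdag : H →L[ℂ] H) (Bseqdag : ℕ → H →L[ℂ] H)
    (hBcr : IsClosed (LinearMap.range (B : H →ₗ[ℂ] H) : Set H))
    (hBncr : ∀ n, IsClosed (LinearMap.range (Bseq n : H →ₗ[ℂ] H) : Set H))
    (hB : IsMP B Bdag) (hBn : ∀ n, IsMP (Bseq n) (Bseqdag n))
    (hmem : ∀ n, S.mem (Bseq n - B))
    (hconv : Filter.Tendsto (fun n => S.snorm (Bseq n - B)) Filter.atTop (nhds 0))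
    (hker : ∀ᶠ n in Filter.atTop,
      (LinearMap.ker (Bseq n : H →ₗ[ℂ] H))ᗮ ⊓ LinearMap.ker (B : H →ₗ[ℂ] H) = (⊥ : Submodule ℂ H)) :
    Filter.Tendsto (fun n => S.snorm (Bseqdag n - Bdag)) Filter.atTop (nhds 0) :=
  mp_continuity_of_eventually_trivial_intersection_general S B Bseq Bdag Bseqdag hB hBn hmem hconv
    hker
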